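/- Let ξ₁, ξ₂, … be IID Bernoulli(p) random variables and let δ > 0. Define, for each n ≥ 2, the interval Iₙ = { q : |q − p̂_{⌊⌊n⌋⌋}| < sqrt((2·ln(⌊log₂ n⌋) + ln(3.3/δ))/(2·⌊⌊n⌋⌋)) }, where ⌊⌊n⌋⌋ is the largest power of two 2^k with k ≥ 1 and 2^k ≤ n, and p̂_m is the empirical mean of the first m observations. Then P(∀ n ≥ 2 : p ∈ Iₙ) ≥ 1 − δ. -/

import Mathlib

/-!
For `2 ^ k ≤ n < 2 ^ (k + 1)` the interval `Iₙ` depends only on `k`, so covering `p` for all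
`n ≥ 2` means covering it at every dyadic scale `k ≥ 1`. Hoeffding's inequality at sample size
`2 ^ k`, with the radius chosen so that `2 · 2 ^ k · εₖ² = 2 log k + log (3.3 / δ)`, bounds the
failure probability at scale `k` by `2 (δ / 3.3) / k²`. A union bound and `∑ 1 / k² = π² / 6`
give a total failure probability of at most `δ π² / 9.9 ≤ δ`.
-/

open MeasureTheory ProbabilityTheory Real Finset
open scoped ENNReal NNReal

lemma Nat.forall_two_le_imp_log_two_iff {P : ℕ → Prop} :
    (∀ n, 2 ≤ n → P (Nat.log 2 n)) ↔ ∀ k, 1 ≤ k → P k := by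
  refine ⟨fun h k hk => ?_, fun h n hn => h _ (Nat.log_pos one_lt_two hn)⟩
  simpa [Nat.log_pow one_lt_two] using h (2 ^ k) (Nat.le_self_pow (by omega) 2)

namespace ProbabilityTheory

variable {Ω : Type*} [MeasurableSpace Ω] {μ : Measure Ω}

lemma measureReal_abs_sum_range_ge_le_of_iIndepFun [IsFiniteMeasure μ] {X : ℕ → Ω → ℝ}
    (h_indep : iIndepFun X μ) {c : ℝ≥0} {n : ℕ}
    (h_subG : ∀ i < n, HasSubgaussianMGF (X i) c μ) {ε : ℝ} (hε : 0 ≤ ε) :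
    μ.real {ω | ε ≤ |∑ i ∈ range n, X i ω|} ≤ 2 * exp (-ε ^ 2 / (2 * n * c)) := by
  have h_upper := HasSubgaussianMGF.measure_sum_range_ge_le_of_iIndepFun h_indep h_subG hε
  have h_lower := HasSubgaussianMGF.measure_sum_range_ge_le_of_iIndepFun
    (h_indep.comp (fun _ x => -x) fun _ => measurable_neg) (fun i hi => (h_subG i hi).neg) hε
  simp only [Function.comp_apply] at h_lower
  calc μ.real {ω | ε ≤ |∑ i ∈ range n, X i ω|}
      ≤ μ.real ({ω | ε ≤ ∑ i ∈ range n, X i ω} ∪ {ω | ε ≤ ∑ i ∈ range n, -X i ω}) := by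
        refine measureReal_mono fun ω hω => ?_
        simpa only [Set.mem_union, Set.mem_ofPred_eq, le_abs, sum_neg_distrib] using hω
    _ ≤ _ := measureReal_union_le _ _
    _ ≤ 2 * exp (-ε ^ 2 / (2 * n * c)) := by linarith

section EmpiricalMean

variable [IsProbabilityMeasure μ] {ξ : ℕ → Ω → ℝ} (hmeas : ∀ i, Measurable (ξ i))
  (hindep : iIndepFun ξ μ) (hbound : ∀ i ω, ξ i ω ∈ Set.Icc (0 : ℝ) 1) {p : ℝ}
  (hmean : ∀ i, μ[ξ i] = p) {m : ℕ} (hm : 0 < m)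
include hmeas hindep hbound hmean hm

lemma measureReal_abs_sub_empiricalMean_ge_le {ε : ℝ} (hε : 0 ≤ ε) :
    μ.real {ω | ε ≤ |p - (1 / (m : ℝ)) * ∑ i ∈ range m, ξ i ω|} ≤ 2 * exp (-2 * m * ε ^ 2) := by
  have hm' : (0 : ℝ) < m := Nat.cast_pos.2 hm
  have h_subG : ∀ i < m, HasSubgaussianMGF (fun ω => ξ i ω - p) (1 / 4) μ := fun i _ => by
    have h := hasSubgaussianMGF_of_mem_Icc (hmeas i).aemeasurable (ae_of_all μ (hbound i))
    rw [hmean i] at h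
    convert h
    ext; norm_num
  have h_indep : iIndepFun (fun i ω => ξ i ω - p) μ :=
    hindep.comp (fun _ x => x - p) fun _ => measurable_id.sub_const p
  have h := measureReal_abs_sum_range_ge_le_of_iIndepFun h_indep h_subG (mul_nonneg hm'.le hε)
  convert h using 3
  · ext ω
    have h_sum : ∑ i ∈ range m, (ξ i ω - p) = -(m * (p - 1 / m * ∑ i ∈ range m, ξ i ω)) := by
      rw [sum_sub_distrib, sum_const, card_range, nsmul_eq_mul]
      field_simp
      ring
    rw [h_sum, abs_neg, abs_mul, Nat.abs_cast, mul_le_mul_iff_right₀ hm']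
  · field_simp
    push_cast
    ring

lemma measure_sqrt_le_abs_sub_empiricalMean_le (x : ℝ) :
    μ {ω | √x ≤ |p - (1 / (m : ℝ)) * ∑ i ∈ range m, ξ i ω|} ≤
      ENNReal.ofReal (2 * exp (-2 * m * x)) := by
  rcases le_total 0 x with hx | hx
  · rw [← ofReal_measureReal]
    refine ENNReal.ofReal_le_ofReal ?_
    simpa only [sq_sqrt hx] using
      measureReal_abs_sub_empiricalMean_ge_le hmeas hindep hbound hmean hm (sqrt_nonneg x)
  · refine prob_le_one.trans ?_
    rw [← ENNReal.ofReal_one]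
    refine ENNReal.ofReal_le_ofReal ?_
    have : 1 ≤ exp (-2 * m * x) := one_le_exp (by nlinarith [(Nat.cast_nonneg m : (0 : ℝ) ≤ m)])
    linarith

end EmpiricalMean

lemma integral_eq_measureReal_eq_one {X : Ω → ℝ} (hX : Measurable X)
    (h01 : ∀ ω, X ω = 0 ∨ X ω = 1) : μ[X] = μ.real {ω | X ω = 1} := by
  have : X = {ω | X ω = 1}.indicator 1 := by
    ext ω
    rcases h01 ω with h | h <;> simp [h]
  conv_lhs => rw [this]
  exact integral_indicator_one (hX (measurableSet_singleton 1))

lemma ofReal_one_sub_le_measure_forall_of_compl_le_div_sq [IsProbabilityMeasure μ]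
    (s : ℕ → Set Ω) {c : ℝ} (hc : 0 ≤ c) (h : ∀ k, 1 ≤ k → μ (s k)ᶜ ≤ ENNReal.ofReal (c / k ^ 2)) :
    ENNReal.ofReal (1 - c * (π ^ 2 / 6)) ≤ μ {ω | ∀ k, 1 ≤ k → ω ∈ s k} := by
  set good := {ω | ∀ k, 1 ≤ k → ω ∈ s k}
  have h_sum : HasSum (fun k : ℕ => c / k ^ 2) (c * (π ^ 2 / 6)) := by
    simpa only [mul_one_div] using hasSum_zeta_two.mul_left c
  have h_bad : μ goodᶜ ≤ ENNReal.ofReal (c * (π ^ 2 / 6)) := by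
    have h_sub : goodᶜ ⊆ ⋃ k, ⋃ (_ : 1 ≤ k), (s k)ᶜ := by
      intro ω hω
      simpa [good] using hω
    calc μ goodᶜ ≤ ∑' k, μ (⋃ (_ : 1 ≤ k), (s k)ᶜ) :=
          (measure_mono h_sub).trans (measure_iUnion_le _)
      _ ≤ ∑' k : ℕ, ENNReal.ofReal (c / k ^ 2) := by
          refine ENNReal.tsum_le_tsum fun k => ?_
          by_cases hk : 1 ≤ k
          · simpa [hk] using h k hk
          · simp [hk]
      _ = ENNReal.ofReal (c * (π ^ 2 / 6)) := by
          rw [← h_sum.tsum_eq, ENNReal.ofReal_tsum_of_nonneg (fun k => by positivity) h_sum.summable]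
  calc ENNReal.ofReal (1 - c * (π ^ 2 / 6)) = 1 - ENNReal.ofReal (c * (π ^ 2 / 6)) := by
        rw [ENNReal.ofReal_sub _ (by positivity), ENNReal.ofReal_one]
    _ ≤ 1 - μ goodᶜ := tsub_le_tsub_left h_bad 1
    _ ≤ μ good := by
        rw [tsub_le_iff_right, ← measure_univ (μ := μ)]
        exact measure_univ_le_add_compl good

end ProbabilityTheory

theorem stmt_18_general {Ω : Type*} [MeasurableSpace Ω] (μ : Measure Ω) [IsProbabilityMeasure μ]
    (ξ : ℕ → Ω → ℝ)
    (hmeas : ∀ i, Measurable (ξ i))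
    (hindep : iIndepFun ξ μ)
    (hval : ∀ i ω, ξ i ω = 0 ∨ ξ i ω = 1)
    (p : ℝ)
    (hbern : ∀ i, (μ {ω | ξ i ω = 1}).toReal = p)
    (δ : ℝ) (hδ : 0 < δ) :
    ENNReal.ofReal (1 - δ) ≤
      μ {ω | ∀ n : ℕ, 2 ≤ n →
        |p - (1 / (2 ^ Nat.log 2 n : ℝ)) *
            ∑ i ∈ Finset.range (2 ^ Nat.log 2 n), ξ i ω| <
          Real.sqrt ((2 * Real.log (Nat.log 2 n) + Real.log (3.3 / δ)) /
            (2 * 2 ^ Nat.log 2 n))} := by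
  have hmean (i : ℕ) : μ[ξ i] = p :=
    (integral_eq_measureReal_eq_one (hmeas i) (hval i)).trans (hbern i)
  have hbound (i : ℕ) (ω : Ω) : ξ i ω ∈ Set.Icc (0 : ℝ) 1 := by
    rcases hval i ω with h | h <;> simp [h]
  have hscale (k : ℕ) (hk : 1 ≤ k) :
      μ {ω | |p - (1 / (2 ^ k : ℝ)) * ∑ i ∈ range (2 ^ k), ξ i ω| <
        √((2 * log k + log (3.3 / δ)) / (2 * 2 ^ k))}ᶜ ≤ ENNReal.ofReal (2 * (δ / 3.3) / k ^ 2) := by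
    have h_exponent : -2 * ((2 ^ k : ℕ) : ℝ) * ((2 * log k + log (3.3 / δ)) / (2 * 2 ^ k)) =
        -log (k ^ 2 * (3.3 / δ)) := by
      rw [log_mul (by positivity) (by positivity), log_pow]
      field_simp
      push_cast
      ring
    convert measure_sqrt_le_abs_sub_empiricalMean_le hmeas hindep hbound hmean
      (Nat.two_pow_pos k) ((2 * log k + log (3.3 / δ)) / (2 * 2 ^ k)) using 3
    · ext ω
      simp
    · rw [h_exponent, exp_neg, exp_log (by positivity)]
      field_simp
  have hπ : π ^ 2 < 9.9 := by nlinarith [pi_lt_d4, pi_pos]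
  calc ENNReal.ofReal (1 - δ) ≤ ENNReal.ofReal (1 - 2 * (δ / 3.3) * (π ^ 2 / 6)) :=
        ENNReal.ofReal_le_ofReal (by norm_num at hπ ⊢; nlinarith [mul_lt_mul_of_pos_left hπ hδ])
    _ ≤ _ := ofReal_one_sub_le_measure_forall_of_compl_le_div_sq _ (by positivity) hscale
    _ = _ := congrArg μ (Set.ext fun ω => Nat.forall_two_le_imp_log_two_iff.symm)

theorem stmt_18 {Ω : Type*} [MeasurableSpace Ω] (μ : Measure Ω) [IsProbabilityMeasure μ]
    (ξ : ℕ → Ω → ℝ)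
    (hmeas : ∀ i, Measurable (ξ i))
    (hindep : iIndepFun ξ μ)
    (hval : ∀ i ω, ξ i ω = 0 ∨ ξ i ω = 1)
    (p : ℝ) (hp : p ∈ Set.Icc (0 : ℝ) 1)
    (hbern : ∀ i, (μ {ω | ξ i ω = 1}).toReal = p)
    (δ : ℝ) (hδ : 0 < δ) :
    ENNReal.ofReal (1 - δ) ≤
      μ {ω | ∀ n : ℕ, 2 ≤ n →
        |p - (1 / (2 ^ Nat.log 2 n : ℝ)) *
            ∑ i ∈ Finset.range (2 ^ Nat.log 2 n), ξ i ω| <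
          Real.sqrt ((2 * Real.log (Nat.log 2 n) + Real.log (3.3 / δ)) /
            (2 * 2 ^ Nat.log 2 n))} :=
  stmt_18_general μ ξ hmeas hindep hval p hbern δ hδ
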